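/- Let d ≥ 1, ρ a bipartite density operator on ℂ^d ⊗ ℂ^d, and ε > 0. Suppose τ is a bipartite density operator with entanglement fraction F(τ) := ⟨φ⁺|τ|φ⁺⟩ ≥ 1 − ε(d+1)/(4d), supp(ρ) ⊆ supp(τ), and k := D_max(ρ‖τ). If n ≥ 2^{k+2} d / (ε(d+1)), then the state ρ^{(n)} := (1/n)ρ + ((n−1)/n)τ satisfies F(ρ^{(n)}) ≥ 1 − ε(d+1)/d. -/

import Mathlib

open Classical

open Matrix
open scoped ComplexOrder

noncomputable def msqrt {n : Type*} [Fintype n] [DecidableEq n] (A : Matrix n n ℂ) :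
    Matrix n n ℂ :=
  if h : A.PosSemidef then (h.1.eigenvectorUnitary : Matrix n n ℂ) *
    diagonal ((↑) ∘ (Real.sqrt ·) ∘ h.1.eigenvalues) * (star h.1.eigenvectorUnitary : Matrix n n ℂ)
  else 0

/-- Uhlmann fidelity F_U(ρ,σ) = (Tr √(√σ ρ √σ))². -/
noncomputable def uFid {n : Type*} [Fintype n] [DecidableEq n] (ρ σ : Matrix n n ℂ) : ℝ :=
  ((msqrt (msqrt σ * ρ * msqrt σ)).trace.re) ^ 2

/-- Purified distance. -/
noncomputable def pDist {n : Type*} [Fintype n] [DecidableEq n] (ρ σ : Matrix n n ℂ) : ℝ :=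
  Real.sqrt (1 - uFid ρ σ)

def IsDensity {n : Type*} [Fintype n] [DecidableEq n] (ρ : Matrix n n ℂ) : Prop :=
  ρ.PosSemidef ∧ ρ.trace = 1

noncomputable def Dmax {n : Type*} [Fintype n] [DecidableEq n] (ρ σ : Matrix n n ℂ) : ℝ :=
  sInf {l : ℝ | (((2 : ℝ) ^ l) • σ - ρ).PosSemidef}

/-- The maximally entangled vector on `ℂ^d ⊗ ℂ^d`. -/
noncomputable def maxEnt (d : ℕ) : (Fin d × Fin d) → ℂ :=
  fun p => if p.1 = p.2 then ((1 / Real.sqrt d : ℝ) : ℂ) else 0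

/-- Entanglement fraction F(σ) = ⟨φ⁺|σ|φ⁺⟩. -/
noncomputable def entFrac {d : ℕ} (σ : Matrix (Fin d × Fin d) (Fin d × Fin d) ℂ) : ℝ :=
  (star (maxEnt d) ⬝ᵥ σ *ᵥ maxEnt d).re

/-- The maximally entangled state |φ⁺⟩⟨φ⁺|. -/
noncomputable def maxEntOp (d : ℕ) : Matrix (Fin d × Fin d) (Fin d × Fin d) ℂ :=
  vecMulVec (maxEnt d) (star (maxEnt d))

/-! Since `entFrac` is linear and nonnegative on states, giving `τ` the weight `1 - 1/n` costs at
most `1/n + ε(d+1)/(4d)`; and `D_max ≥ 0` turns the bound on `n` into `1/n ≤ ε(d+1)/(4d)`.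
No purified-distance estimate is needed. -/

lemma entFrac_smul_add_smul {d : ℕ} (a b : ℝ) (ρ τ : Matrix (Fin d × Fin d) (Fin d × Fin d) ℂ) :
    entFrac (a • ρ + b • τ) = a * entFrac ρ + b * entFrac τ := by
  simp [entFrac, add_mulVec, smul_mulVec, dotProduct_add, dotProduct_smul, Complex.real_smul]

lemma Matrix.PosSemidef.entFrac_nonneg {d : ℕ} {σ : Matrix (Fin d × Fin d) (Fin d × Fin d) ℂ}
    (h : σ.PosSemidef) : 0 ≤ entFrac σ :=
  h.re_dotProduct_nonneg (maxEnt d)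

/-- Taking the trace of `2^l • τ - ρ ≥ 0` gives `2^l ≥ 1` for every admissible `l`. -/
lemma Dmax_nonneg {m : Type*} [Fintype m] [DecidableEq m] {ρ τ : Matrix m m ℂ}
    (hρ : ρ.trace = 1) (hτ : τ.trace = 1) : 0 ≤ Dmax ρ τ := by
  refine Real.sInf_nonneg fun l hl => ?_
  have htrace : 0 ≤ ((((2 : ℝ) ^ l) • τ - ρ).trace).re := (Complex.nonneg_iff.1 hl.trace_nonneg).1
  rw [trace_sub, trace_smul, hρ, hτ] at htrace
  have h_one_le : (1 : ℝ) ≤ 2 ^ l := by simpa using htrace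
  by_contra! hl_neg
  exact (Real.rpow_lt_one_of_one_lt_of_neg one_lt_two hl_neg).not_ge h_one_le

lemma le_entFrac_smul_add_one_sub_smul {d : ℕ} {ρ τ : Matrix (Fin d × Fin d) (Fin d × Fin d) ℂ}
    (hρ : ρ.PosSemidef) {a : ℝ} (ha : 0 ≤ a) (hτ : 1 - a ≤ entFrac τ) {t : ℝ} (ht₀ : 0 ≤ t)
    (ht₁ : t ≤ 1) : 1 - a - t ≤ entFrac (t • ρ + (1 - t) • τ) := by
  rw [entFrac_smul_add_smul]
  nlinarith [mul_nonneg ht₀ hρ.entFrac_nonneg, mul_le_mul_of_nonneg_left hτ (sub_nonneg.2 ht₁)]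

lemma four_le_two_rpow_add_two {k : ℝ} (hk : 0 ≤ k) : (4 : ℝ) ≤ 2 ^ (k + 2) := by
  calc (4 : ℝ) = 2 ^ (2 : ℝ) := by norm_num
    _ ≤ 2 ^ (k + 2) := Real.rpow_le_rpow_of_exponent_le one_le_two (by linarith)

theorem convex_split_entanglement_fraction_general {d : ℕ} (hd : 1 ≤ d)
    (ρ τ : Matrix (Fin d × Fin d) (Fin d × Fin d) ℂ)
    (hρ : IsDensity ρ) (hτ : IsDensity τ) (ε : ℝ) (hε : 0 < ε)
    (hF : entFrac τ ≥ 1 - ε * (d + 1) / (4 * d))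
    (k : ℝ) (hk : k = Dmax ρ τ)
    (n : ℕ) (hn : (n : ℝ) ≥ 2 ^ (k + 2) * d / (ε * (d + 1))) :
    entFrac (((n : ℝ))⁻¹ • ρ + (((n : ℝ) - 1) / n) • τ) ≥ 1 - ε * (d + 1) / d := by
  have hd₀ : (0 : ℝ) < d := by exact_mod_cast hd
  set a := ε * (d + 1) / (4 * d) with ha
  have ha₀ : 0 < a := by positivity
  have h_four : (4 : ℝ) ≤ 2 ^ (k + 2) := four_le_two_rpow_add_two (hk ▸ Dmax_nonneg hρ.2 hτ.2)
  have h_inv_a_le : a⁻¹ ≤ n :=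
    calc a⁻¹ = 4 * d / (ε * (d + 1)) := by rw [ha, inv_div]
      _ ≤ 2 ^ (k + 2) * d / (ε * (d + 1)) := by gcongr
      _ ≤ n := hn
  have hn₀ : (0 : ℝ) < n := (inv_pos.2 ha₀).trans_le h_inv_a_le
  have h_inv_n_le : (n : ℝ)⁻¹ ≤ a := inv_le_of_inv_le₀ ha₀ h_inv_a_le
  have h_weight : ((n : ℝ) - 1) / n = 1 - (n : ℝ)⁻¹ := by field_simp
  have h_mix := le_entFrac_smul_add_one_sub_smul hρ.1 ha₀.le (by linarith)
    (inv_nonneg.2 hn₀.le) (Nat.cast_inv_le_one n)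
  have h_target : ε * (d + 1) / d = 4 * a := by rw [ha]; field_simp
  rw [h_weight, h_target]
  linarith

theorem convex_split_entanglement_fraction {d : ℕ} (hd : 1 ≤ d)
    (ρ τ : Matrix (Fin d × Fin d) (Fin d × Fin d) ℂ)
    (hρ : IsDensity ρ) (hτ : IsDensity τ) (ε : ℝ) (hε : 0 < ε)
    (hF : entFrac τ ≥ 1 - ε * (d + 1) / (4 * d))
    (hsupp : LinearMap.range (Matrix.toLin' ρ) ≤ LinearMap.range (Matrix.toLin' τ))
    (k : ℝ) (hk : k = Dmax ρ τ)
    (n : ℕ) (hn : (n : ℝ) ≥ 2 ^ (k + 2) * d / (ε * (d + 1))) :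
    entFrac (((n : ℝ))⁻¹ • ρ + (((n : ℝ) - 1) / n) • τ) ≥ 1 - ε * (d + 1) / d :=
  convex_split_entanglement_fraction_general hd ρ τ hρ hτ ε hε hF k hk n hn
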